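/- arXiv:1502.04019 — 8 statements merged into one kernel-verified Lean document; each statement's English description precedes it below -/
import Mathlib

section
/- If M_J : S^n → X^n is (ε_J, δ)-jointly differentially private and M_D : X^n → O is ε_D-differentially private, then the composition M(s) = M_D(M_J(s)) is (2ε_D + ε_J, δ)-differentially private. -/
/-!
Fix a player `i` and an event `B`, and let `h x = Pr[M_D(x) ∈ B]`. Because `M_D` is
`ε_D`-differentially private, `h` changes by at most a factor `e^{ε_D}` when `x_i` changes, so
it is sandwiched as `h ≤ V ∘ π ≤ e^{ε_D} h` by a `[0,1]`-valued `V` of `π x = x_{-i}` alone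
(the infimum of `e^{ε_D} h` over the fibre of `π`, capped at `1`). Joint differential privacy of
`M_J` is an `(e^{ε_J}, δ)` bound on events in `x_{-i}`, and such a bound extends from indicators
to all `[0,1]`-valued functions of `x_{-i}`. Chaining the three inequalities gives privacy loss
`ε_D + ε_J ≤ 2ε_D + ε_J`.
-/

/-- `(ε,δ)`-differential privacy for a randomized mechanism `M : Sⁿ → PMF O`. -/
def DiffPrivate {S O : Type*} {n : ℕ} (M : (Fin n → S) → PMF O) (ε δ : ℝ) : Prop :=
  ∀ (i : Fin n) (s : Fin n → S) (si' : S) (B : Set O),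
    (M s).toOuterMeasure B ≤
      ENNReal.ofReal (Real.exp ε) * (M (Function.update s i si')).toOuterMeasure B
        + ENNReal.ofReal δ

/-- `(ε,δ)`-joint differential privacy: for every player `i`, the joint output to the
players other than `i` is differentially private in `i`'s input. -/
def JointDiffPrivate {S X : Type*} {n : ℕ}
    (M : (Fin n → S) → PMF (Fin n → X)) (ε δ : ℝ) : Prop :=
  ∀ (i : Fin n) (s : Fin n → S) (si' : S)
    (B : Set ({j : Fin n // j ≠ i} → X)),
    (M s).toOuterMeasure {x | (fun j : {j : Fin n // j ≠ i} => x j.1) ∈ B} ≤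
      ENNReal.ofReal (Real.exp ε) *
        (M (Function.update s i si')).toOuterMeasure
          {x | (fun j : {j : Fin n // j ≠ i} => x j.1) ∈ B}
        + ENNReal.ofReal δ

open scoped ENNReal

theorem PMF.tsum_map_mul {α β : Type*} (p : PMF α) (f : α → β) (g : β → ℝ≥0∞) :
    ∑' b, p.map f b * g b = ∑' a, p a * g (f a) := by
  classical
  simp only [PMF.map_apply, ← ENNReal.tsum_mul_right, ite_mul, zero_mul]
  rw [ENNReal.tsum_comm]
  exact tsum_congr fun a => tsum_ite_eq (f a) _

theorem PMF.toOuterMeasure_apply_le_one {α : Type*} (p : PMF α) (s : Set α) :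
    p.toOuterMeasure s ≤ 1 := by
  rw [p.toOuterMeasure_apply]
  exact (ENNReal.tsum_le_tsum (Set.indicator_le_self s p)).trans_eq p.tsum_coe

theorem PMF.tsum_tsub_le_of_toOuterMeasure_le {β : Type*} {P Q : PMF β} {c d : ℝ≥0∞}
    (hc : c ≠ ∞) (h : ∀ B, P.toOuterMeasure B ≤ c * Q.toOuterMeasure B + d) :
    ∑' y, (P y - c * Q y) ≤ d := by
  -- the truncated differences vanish off `A`, so their sum is the excess `P A - c Q A`
  set A := {y | c * Q y < P y}
  have hcQ : c * Q.toOuterMeasure A ≠ ∞ :=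
    ENNReal.mul_ne_top hc (ne_top_of_le_ne_top ENNReal.one_ne_top (Q.toOuterMeasure_apply_le_one A))
  have hsplit : ∑' y, (P y - c * Q y) + c * Q.toOuterMeasure A = P.toOuterMeasure A := by
    simp only [PMF.toOuterMeasure_apply, ← ENNReal.tsum_mul_left, ← ENNReal.tsum_add]
    refine tsum_congr fun y => ?_
    by_cases hy : c * Q y < P y
    · simp only [Set.indicator_of_mem (show y ∈ A from hy)]
      exact tsub_add_cancel_of_le hy.le
    · simp [Set.indicator_of_notMem (show y ∉ A from hy), tsub_eq_zero_of_le (not_lt.mp hy)]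
  exact (ENNReal.add_le_add_iff_right hcQ).mp (hsplit ▸ (h A).trans_eq (add_comm _ _))

theorem PMF.tsum_mul_le_of_toOuterMeasure_le {β : Type*} {P Q : PMF β} {c d : ℝ≥0∞}
    (hc : c ≠ ∞) (h : ∀ B, P.toOuterMeasure B ≤ c * Q.toOuterMeasure B + d)
    {G : β → ℝ≥0∞} (hG : ∀ y, G y ≤ 1) :
    ∑' y, P y * G y ≤ c * ∑' y, Q y * G y + d := by
  have hpoint : ∀ y, P y * G y ≤ c * (Q y * G y) + (P y - c * Q y) := fun y =>
    calc P y * G y ≤ (c * Q y + (P y - c * Q y)) * G y := by gcongr; exact le_add_tsub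
      _ ≤ c * (Q y * G y) + (P y - c * Q y) * 1 := by rw [add_mul, mul_assoc]; gcongr; exact hG y
      _ = c * (Q y * G y) + (P y - c * Q y) := by rw [mul_one]
  calc ∑' y, P y * G y ≤ ∑' y, (c * (Q y * G y) + (P y - c * Q y)) :=
        ENNReal.tsum_le_tsum hpoint
    _ = c * ∑' y, Q y * G y + ∑' y, (P y - c * Q y) := by
        rw [ENNReal.tsum_add, ENNReal.tsum_mul_left]
    _ ≤ c * ∑' y, Q y * G y + d := by gcongr; exact PMF.tsum_tsub_le_of_toOuterMeasure_le hc h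

theorem PMF.tsum_mul_comp_le_of_toOuterMeasure_preimage_le {α β : Type*} {p q : PMF α}
    {π : α → β} {c d : ℝ≥0∞} (hc : c ≠ ∞)
    (h : ∀ B, p.toOuterMeasure (π ⁻¹' B) ≤ c * q.toOuterMeasure (π ⁻¹' B) + d)
    {G : β → ℝ≥0∞} (hG : ∀ y, G y ≤ 1) :
    ∑' x, p x * G (π x) ≤ c * ∑' x, q x * G (π x) + d := by
  simpa only [PMF.tsum_map_mul] using PMF.tsum_mul_le_of_toOuterMeasure_le (P := p.map π)
    (Q := q.map π) hc (by simpa only [PMF.toOuterMeasure_map_apply] using h) hG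

theorem exists_le_one_sandwich_of_le_mul_on_fibers {α β : Type*} (π : α → β) {h : α → ℝ≥0∞}
    {c : ℝ≥0∞} (h_le_one : ∀ x, h x ≤ 1) (hfib : ∀ x x', π x = π x' → h x ≤ c * h x') :
    ∃ V : β → ℝ≥0∞, (∀ y, V y ≤ 1) ∧ (∀ x, h x ≤ V (π x)) ∧ ∀ x, V (π x) ≤ c * h x := by
  refine ⟨fun y => min 1 (⨅ (x : α) (_ : π x = y), c * h x), fun y => min_le_left _ _,
    fun x => le_min (h_le_one x) (le_iInf₂ fun x' hx' => hfib x x' hx'.symm), fun x => ?_⟩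
  exact (min_le_right _ _).trans (iInf_le_of_le x (iInf_le _ rfl))

theorem DiffPrivate.mono {S O : Type*} {n : ℕ} {M : (Fin n → S) → PMF O} {ε ε' δ : ℝ}
    (hM : DiffPrivate M ε δ) (hε : ε ≤ ε') : DiffPrivate M ε' δ :=
  fun i s si' B => (hM i s si' B).trans (by gcongr)

theorem DiffPrivate.bind_of_jointDiffPrivate {S X O : Type*} {n : ℕ}
    {MJ : (Fin n → S) → PMF (Fin n → X)} {MD : (Fin n → X) → PMF O} {εJ εD δ : ℝ}
    (hJ : JointDiffPrivate MJ εJ δ) (hD : DiffPrivate MD εD 0) :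
    DiffPrivate (fun s => (MJ s).bind MD) (εD + εJ) δ := by
  intro i s si' B
  set π : (Fin n → X) → ({j : Fin n // j ≠ i} → X) := fun x j => x j.1
  set h : (Fin n → X) → ℝ≥0∞ := fun x => (MD x).toOuterMeasure B
  have hfib : ∀ x x', π x = π x' → h x ≤ ENNReal.ofReal (Real.exp εD) * h x' := by
    intro x x' hxx'
    have hx' : x' = Function.update x i (x' i) :=
      Function.eq_update_iff.2 ⟨rfl, fun j hj => (congrFun hxx' ⟨j, hj⟩).symm⟩
    simpa [h, ← hx'] using hD i x (x' i) B
  obtain ⟨V, hV_le_one, h_le_V, hV_le⟩ := exists_le_one_sandwich_of_le_mul_on_fibers π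
    (fun x => (MD x).toOuterMeasure_apply_le_one B) hfib
  simp only [PMF.toOuterMeasure_bind_apply]
  calc ∑' x, MJ s x * h x ≤ ∑' x, MJ s x * V (π x) :=
        ENNReal.tsum_le_tsum fun x => by gcongr; exact h_le_V x
    _ ≤ ENNReal.ofReal (Real.exp εJ) * ∑' x, MJ (Function.update s i si') x * V (π x)
          + ENNReal.ofReal δ :=
        PMF.tsum_mul_comp_le_of_toOuterMeasure_preimage_le ENNReal.ofReal_ne_top
          (hJ i s si') hV_le_one
    _ ≤ ENNReal.ofReal (Real.exp εJ) * (ENNReal.ofReal (Real.exp εD)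
          * ∑' x, MJ (Function.update s i si') x * h x) + ENNReal.ofReal δ := by
        gcongr
        rw [← ENNReal.tsum_mul_left]
        exact ENNReal.tsum_le_tsum fun x =>
          (mul_le_mul_right (hV_le x) _).trans_eq (mul_left_comm _ _ _)
    _ = ENNReal.ofReal (Real.exp (εD + εJ)) * ∑' x, MJ (Function.update s i si') x * h x
          + ENNReal.ofReal δ := by
        rw [← mul_assoc, ← ENNReal.ofReal_mul (Real.exp_nonneg _), ← Real.exp_add, add_comm εJ]

theorem dp_of_dp_comp_jdp_general {S X O : Type*} {n : ℕ}
    (MJ : (Fin n → S) → PMF (Fin n → X)) (MD : (Fin n → X) → PMF O)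
    (εJ εD δ : ℝ) (hεD : 0 ≤ εD)
    (hJ : JointDiffPrivate MJ εJ δ) (hD : DiffPrivate MD εD 0) :
    DiffPrivate (fun s => (MJ s).bind MD) (2 * εD + εJ) δ :=
  (DiffPrivate.bind_of_jointDiffPrivate hJ hD).mono (by linarith)

/-- Composing an `(ε_J, δ)`-jointly differentially private algorithm with an
`ε_D`-differentially private algorithm yields a `(2ε_D + ε_J, δ)`-differentially
private algorithm. -/
theorem dp_of_dp_comp_jdp {S X O : Type*} {n : ℕ}
    (MJ : (Fin n → S) → PMF (Fin n → X)) (MD : (Fin n → X) → PMF O)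
    (εJ εD δ : ℝ) (hεJ : 0 ≤ εJ) (hεD : 0 ≤ εD) (hδ : 0 ≤ δ)
    (hJ : JointDiffPrivate MJ εJ δ) (hD : DiffPrivate MD εD 0) :
    DiffPrivate (fun s => (MJ s).bind MD) (2 * εD + εJ) δ :=
  dp_of_dp_comp_jdp_general MJ MD εJ εD δ hεD hJ hD
end

section
/- Billboard Lemma: Let M : S^n → O be an (ε, δ)-differentially private mechanism and θ : S × O → A any function. Define M' : S^n → A^n by M'(s)_i = θ(s_i, M(s)) (using a single shared draw o = M(s)). Then M' is (ε, δ)-jointly differentially private. -/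
/-- Billboard Lemma: if `M` is `(ε,δ)`-differentially private and each player `i`'s
output is `θ(s_i, o)` computed from a single shared draw `o ~ M(s)` together with her
own type, then the resulting mechanism is `(ε,δ)`-jointly differentially private. -/
theorem billboard_lemma {S O A : Type*} {n : ℕ}
    (M : (Fin n → S) → PMF O) (ε δ : ℝ)
    (hM : DiffPrivate M ε δ) (θ : S → O → A) :
    JointDiffPrivate (fun s => (M s).map (fun o (i : Fin n) => θ (s i) o)) ε δ := by
  intro i s si' B
  simp only [PMF.toOuterMeasure_map_apply]
  have h2 : ((fun o (k : Fin n) => θ (Function.update s i si' k) o) ⁻¹'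
      {x | (fun j : {j : Fin n // j ≠ i} => x j.1) ∈ B}) =
      ((fun o (k : Fin n) => θ (s k) o) ⁻¹'
        {x | (fun j : {j : Fin n // j ≠ i} => x j.1) ∈ B}) := by
    ext o
    simp only [Set.mem_preimage, Set.mem_setOf_eq]
    have : (fun j : {j : Fin n // j ≠ i} => θ (Function.update s i si' j.1) o) =
        (fun j : {j : Fin n // j ≠ i} => θ (s j.1) o) := by
      funext j; rw [Function.update_of_ne j.2]
    rw [this]
  rw [h2]
  exact hM i s si' _
end

section
/- Online projected gradient descent regret bound (Zinkevich): Let D be a closed convex set of diameter at most D_bound (‖ω - ω'‖₂ ≤ D_bound for all ω, ω' ∈ D), and let r¹,…,r^T be differentiable convex functions on D with ‖∇rᵗ(ω)‖₂ ≤ G for all t, ω ∈ D. With step size η = D_bound/(G√T) and updates ω^{t+1} = Π_D(ωᵗ - η∇rᵗ(ωᵗ)) (Euclidean projection), the regret satisfies Σ_{t=1}^T rᵗ(ωᵗ) - min_{ω∈D} Σ_{t=1}^T rᵗ(ω) ≤ G·D_bound·√T. -/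
/-!
Restricting a differentiable convex loss to a segment gives `rᵗ(ωᵗ) - rᵗ(w) ≤ ⟪∇rᵗ(ωᵗ), ωᵗ - w⟫`.
Projection onto the convex set `D` does not increase the distance to `w ∈ D`, so expanding
`‖ωᵗ - η∇rᵗ(ωᵗ) - w‖²` gives
`2η (rᵗ(ωᵗ) - rᵗ(w)) ≤ ‖ωᵗ - w‖² - ‖ωᵗ⁺¹ - w‖² + η² G²`.
Summing telescopes to `2η · regret ≤ Db² + T η² G²`, and `η = Db/(G√T)` makes the two terms equal.
-/

open Set RealInnerProductSpace

section FirstOrder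

variable {E : Type*} [NormedAddCommGroup E] [NormedSpace ℝ E]

theorem ConvexOn.apply_sub_le_of_hasFDerivAt {S : Set E} {f : E → ℝ} {f' : E →L[ℝ] ℝ} {x y : E}
    (hf : ConvexOn ℝ S f) (hx : x ∈ S) (hy : y ∈ S) (hf' : HasFDerivAt f f' x) :
    f' (y - x) ≤ f y - f x := by
  let ℓ : ℝ →ᵃ[ℝ] E := AffineMap.lineMap x y
  have hφ : ConvexOn ℝ (ℓ ⁻¹' S) (f ∘ ℓ) := hf.comp_affineMap ℓ
  have hderiv : HasDerivAt (f ∘ ℓ) (f' (y - x)) 0 :=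
    (by simpa [ℓ] using hf' : HasFDerivAt f f' (ℓ 0)).comp_hasDerivAt 0
      AffineMap.hasDerivAt_lineMap
  have := hφ.le_slope_of_hasDerivAt (x := 0) (y := 1) (by simpa [ℓ]) (by simpa [ℓ]) one_pos hderiv
  simpa [ℓ, slope_def_field] using this

end FirstOrder

section InnerProduct

variable {E : Type*} [NormedAddCommGroup E] [InnerProductSpace ℝ E]

theorem ConvexOn.sub_le_inner_gradient [CompleteSpace E] {S : Set E} {f : E → ℝ} {x y : E}
    (hf : ConvexOn ℝ S f) (hx : x ∈ S) (hy : y ∈ S) (hfx : DifferentiableAt ℝ f x) :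
    f x - f y ≤ ⟪gradient f x, x - y⟫ := by
  have := hf.apply_sub_le_of_hasFDerivAt hx hy hfx.hasFDerivAt
  rw [inner_gradient_left, ← neg_sub y x, map_neg]
  linarith

theorem Convex.norm_sub_le_of_forall_norm_sub_le {K : Set E} (hK : Convex ℝ K) {v p w : E}
    (hp : p ∈ K) (hmin : ∀ u ∈ K, ‖p - v‖ ≤ ‖u - v‖) (hw : w ∈ K) :
    ‖p - w‖ ≤ ‖v - w‖ := by
  have : Nonempty K := ⟨⟨p, hp⟩⟩
  have hinf : ‖v - p‖ = ⨅ u : K, ‖v - u‖ :=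
    le_antisymm (le_ciInf fun u => by simpa [norm_sub_rev] using hmin u u.2)
      (ciInf_le ⟨0, by rintro _ ⟨u, rfl⟩; positivity⟩ (⟨p, hp⟩ : K))
  have hobtuse : ⟪v - p, w - p⟫ ≤ 0 := (norm_eq_iInf_iff_real_inner_le_zero hK hp).mp hinf w hw
  have hexpand : ‖v - w‖ ^ 2 = ‖v - p‖ ^ 2 - 2 * ⟪v - p, w - p⟫ + ‖p - w‖ ^ 2 := by
    rw [← sub_add_sub_cancel v p w, norm_add_sq_real, ← neg_sub w p, inner_neg_right]
    ring
  refine (pow_le_pow_iff_left₀ (norm_nonneg _) (norm_nonneg _) two_ne_zero).mp ?_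
  linarith [sq_nonneg ‖v - p‖]

theorem two_mul_inner_le_of_norm_sub_le {x x' w g : E} {η : ℝ}
    (h : ‖x' - w‖ ≤ ‖x - η • g - w‖) :
    2 * η * ⟪x - w, g⟫ ≤ ‖x - w‖ ^ 2 - ‖x' - w‖ ^ 2 + η ^ 2 * ‖g‖ ^ 2 := by
  have hexpand : ‖x - η • g - w‖ ^ 2 = ‖x - w‖ ^ 2 - 2 * η * ⟪x - w, g⟫ + η ^ 2 * ‖g‖ ^ 2 := by
    rw [sub_right_comm, norm_sub_sq_real, inner_smul_right, norm_smul, Real.norm_eq_abs, mul_pow,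
      sq_abs]
    ring
  have := pow_le_pow_left₀ (norm_nonneg _) h 2
  linarith

theorem regret_le_of_gradient_steps [CompleteSpace E] {S : Set E} {T : ℕ} {r : Fin T → E → ℝ}
    {ω : ℕ → E} {w : E} {η : ℝ} (hη : 0 ≤ η) (hconv : ∀ t, ConvexOn ℝ S (r t))
    (hω : ∀ t : Fin T, ω t ∈ S) (hw : w ∈ S) (hdiff : ∀ t : Fin T, DifferentiableAt ℝ (r t) (ω t))
    (hstep : ∀ t : Fin T, ‖ω (t + 1) - w‖ ≤ ‖ω t - η • gradient (r t) (ω t) - w‖) :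
    2 * η * ∑ t, (r t (ω t) - r t w) ≤
      ‖ω 0 - w‖ ^ 2 + η ^ 2 * ∑ t, ‖gradient (r t) (ω t)‖ ^ 2 := by
  set a : ℕ → ℝ := fun n => ‖ω n - w‖ ^ 2
  have hround : ∀ t : Fin T, 2 * η * (r t (ω t) - r t w) ≤
      a t - a (t + 1) + η ^ 2 * ‖gradient (r t) (ω t)‖ ^ 2 := fun t =>
    calc 2 * η * (r t (ω t) - r t w)
        ≤ 2 * η * ⟪ω t - w, gradient (r t) (ω t)⟫ := by
          rw [real_inner_comm]
          gcongr
          exact (hconv t).sub_le_inner_gradient (hω t) hw (hdiff t)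
      _ ≤ _ := two_mul_inner_le_of_norm_sub_le (hstep t)
  calc 2 * η * ∑ t, (r t (ω t) - r t w)
      ≤ ∑ t : Fin T, (a t - a (t + 1) + η ^ 2 * ‖gradient (r t) (ω t)‖ ^ 2) := by
        rw [Finset.mul_sum]
        exact Finset.sum_le_sum fun t _ => hround t
    _ = a 0 - a T + η ^ 2 * ∑ t, ‖gradient (r t) (ω t)‖ ^ 2 := by
        rw [Finset.sum_add_distrib, ← Finset.mul_sum,
          Fin.sum_univ_eq_sum_range (fun n => a n - a (n + 1)), Finset.sum_range_sub']
    _ ≤ _ := by linarith [sq_nonneg ‖ω T - w‖]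

end InnerProduct

theorem projected_gradient_descent_regret_general {d : ℕ} (T : ℕ) (hT : 0 < T)
    (D : Set (EuclideanSpace ℝ (Fin d)))
    (hDconv : Convex ℝ D)
    (Db G : ℝ) (hG : 0 < G) (hDb : 0 < Db)
    (hdiam : ∀ ω ∈ D, ∀ ω' ∈ D, ‖ω - ω'‖ ≤ Db)
    (r : Fin T → EuclideanSpace ℝ (Fin d) → ℝ)
    (hdiff : ∀ t, Differentiable ℝ (r t))
    (hconv : ∀ t, ConvexOn ℝ Set.univ (r t))
    (hgrad : ∀ t, ∀ ω ∈ D, ‖gradient (r t) ω‖ ≤ G)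
    (proj : EuclideanSpace ℝ (Fin d) → EuclideanSpace ℝ (Fin d))
    (hproj : ∀ v, proj v ∈ D ∧ ∀ u ∈ D, ‖proj v - v‖ ≤ ‖u - v‖)
    (η : ℝ) (hη : η = Db / (G * Real.sqrt T))
    (ω : ℕ → EuclideanSpace ℝ (Fin d)) (hω0 : ω 0 ∈ D)
    (hrec : ∀ t : Fin T, ω (t.1 + 1) = proj (ω t.1 - η • gradient (r t) (ω t.1))) :
    ∀ w ∈ D, ∑ t : Fin T, (r t (ω t.1) - r t w) ≤ G * Db * Real.sqrt T := by
  intro w hw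
  have hsqrtT : 0 < Real.sqrt T := Real.sqrt_pos.mpr (by exact_mod_cast hT)
  have hηpos : 0 < η := by rw [hη]; positivity
  have hmem : ∀ t : Fin T, ω t ∈ D := by
    rintro ⟨_ | n, hn⟩
    · exact hω0
    · rw [hrec ⟨n, by omega⟩]
      exact (hproj _).1
  have hregret := regret_le_of_gradient_steps (ω := ω) hηpos.le hconv (fun _ => mem_univ _)
    (mem_univ w) (fun t => (hdiff t).differentiableAt) fun t => by
      rw [hrec t]
      exact hDconv.norm_sub_le_of_forall_norm_sub_le (hproj _).1 (hproj _).2 hw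
  have hstart : ‖ω 0 - w‖ ^ 2 ≤ Db ^ 2 :=
    pow_le_pow_left₀ (norm_nonneg _) (hdiam _ hω0 _ hw) 2
  have hgrads : ∑ t, ‖gradient (r t) (ω t)‖ ^ 2 ≤ T * G ^ 2 := by
    simpa using Finset.sum_le_sum (s := Finset.univ) fun t _ =>
      pow_le_pow_left₀ (norm_nonneg _) (hgrad t _ (hmem t)) 2
  have hbalance : Db ^ 2 + η ^ 2 * (T * G ^ 2) = 2 * η * (G * Db * Real.sqrt T) := by
    rw [hη]
    field_simp
    rw [Real.sq_sqrt (Nat.cast_nonneg T)]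
    ring
  refine le_of_mul_le_mul_left (hregret.trans ?_) (by positivity : 0 < 2 * η)
  rw [← hbalance]
  gcongr

/-- Online projected gradient descent regret bound (Zinkevich): with step size
`η = D/(G√T)`, the regret of projected gradient descent against convex differentiable
losses with gradients bounded by `G` on a convex closed domain of diameter `D`
is at most `G·D·√T`. -/
theorem projected_gradient_descent_regret {d : ℕ} (T : ℕ) (hT : 0 < T)
    (D : Set (EuclideanSpace ℝ (Fin d)))
    (hDconv : Convex ℝ D) (hDclosed : IsClosed D)
    (Db G : ℝ) (hG : 0 < G) (hDb : 0 < Db)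
    (hdiam : ∀ ω ∈ D, ∀ ω' ∈ D, ‖ω - ω'‖ ≤ Db)
    (r : Fin T → EuclideanSpace ℝ (Fin d) → ℝ)
    (hdiff : ∀ t, Differentiable ℝ (r t))
    (hconv : ∀ t, ConvexOn ℝ Set.univ (r t))
    (hgrad : ∀ t, ∀ ω ∈ D, ‖gradient (r t) ω‖ ≤ G)
    (proj : EuclideanSpace ℝ (Fin d) → EuclideanSpace ℝ (Fin d))
    (hproj : ∀ v, proj v ∈ D ∧ ∀ u ∈ D, ‖proj v - v‖ ≤ ‖u - v‖)
    (η : ℝ) (hη : η = Db / (G * Real.sqrt T))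
    (ω : ℕ → EuclideanSpace ℝ (Fin d)) (hω0 : ω 0 ∈ D)
    (hrec : ∀ t : Fin T, ω (t.1 + 1) = proj (ω t.1 - η • gradient (r t) (ω t.1))) :
    ∀ w ∈ D, ∑ t : Fin T, (r t (ω t.1) - r t w) ≤ G * Db * Real.sqrt T :=
  projected_gradient_descent_regret_general T hT D hDconv Db G hG hDb hdiam r hdiff hconv hgrad proj
    hproj η hη ω hω0 hrec
end

section
/- Freund–Schapire averaging: In a two-player zero-sum game with payoff L(z, λ) convex in z ∈ Z and concave (here linear) in λ ∈ Λ, suppose sequences z^{(1)},…,z^{(T)} and λ^{(1)},…,λ^{(T)} have regrets R_z = (1/T)Σ_t L(z^{(t)}, λ^{(t)}) - min_{z∈Z}(1/T)Σ_t L(z, λ^{(t)}) and R_λ = max_{λ∈Λ}(1/T)Σ_t L(z^{(t)}, λ) - (1/T)Σ_t L(z^{(t)}, λ^{(t)}). Then the average plays z̄ = (1/T)Σ_t z^{(t)} and λ̄ = (1/T)Σ_t λ^{(t)} form a pair of (R_z + R_λ)-approximate minimax strategies: L(z̄, λ̄) ≤ L(z', λ̄) + (R_z + R_λ) for all z' ∈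 Z, and L(z̄, λ̄) ≥ L(z̄, λ') - (R_z + R_λ) for all λ' ∈ Λ. -/
/-- Freund–Schapire averaging: in a convex-concave zero-sum game, if the two players'
action sequences have regrets `R_z` and `R_λ`, then the average plays form a pair of
`(R_z + R_λ)`-approximate minimax strategies. -/
theorem freund_schapire_averaging {V W : Type*}
    [AddCommGroup V] [Module ℝ V] [AddCommGroup W] [Module ℝ W]
    (Zs : Set V) (Λs : Set W) (hZ : Convex ℝ Zs) (hΛ : Convex ℝ Λs)
    (L : V → W → ℝ)
    (hLconv : ∀ w ∈ Λs, ConvexOn ℝ Zs (fun z => L z w))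
    (hLconc : ∀ z ∈ Zs, ConcaveOn ℝ Λs (fun w => L z w))
    (T : ℕ) (hT : 0 < T)
    (z : Fin T → V) (lam : Fin T → W)
    (hz : ∀ t, z t ∈ Zs) (hlam : ∀ t, lam t ∈ Λs)
    (Rz Rlam : ℝ)
    (hRz : ∀ z' ∈ Zs,
      (1 / T : ℝ) * ∑ t, L (z t) (lam t) ≤ (1 / T : ℝ) * ∑ t, L z' (lam t) + Rz)
    (hRlam : ∀ l' ∈ Λs,
      (1 / T : ℝ) * ∑ t, L (z t) l' ≤ (1 / T : ℝ) * ∑ t, L (z t) (lam t) + Rlam) :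
    (∀ z' ∈ Zs,
      L ((T : ℝ)⁻¹ • ∑ t, z t) ((T : ℝ)⁻¹ • ∑ t, lam t) ≤
        L z' ((T : ℝ)⁻¹ • ∑ t, lam t) + (Rz + Rlam)) ∧
    (∀ l' ∈ Λs,
      L ((T : ℝ)⁻¹ • ∑ t, z t) l' - (Rz + Rlam) ≤
        L ((T : ℝ)⁻¹ • ∑ t, z t) ((T : ℝ)⁻¹ • ∑ t, lam t)) := by
  have hTne : (T:ℝ) ≠ 0 := Nat.cast_ne_zero.2 hT.ne'
  have hw0 : ∀ t ∈ (Finset.univ : Finset (Fin T)), (0:ℝ) ≤ (T:ℝ)⁻¹ := fun _ _ => by positivity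
  have hw1 : ∑ _t ∈ (Finset.univ : Finset (Fin T)), (T:ℝ)⁻¹ = 1 := by
    simp [Finset.sum_const, Finset.card_univ, mul_comm, hTne]
  have hzbar : (T:ℝ)⁻¹ • ∑ t, z t ∈ Zs := by
    rw [Finset.smul_sum]
    exact hZ.sum_mem hw0 hw1 (fun t _ => hz t)
  have hlbar : (T:ℝ)⁻¹ • ∑ t, lam t ∈ Λs := by
    rw [Finset.smul_sum]
    exact hΛ.sum_mem hw0 hw1 (fun t _ => hlam t)
  have key1 : ∀ w ∈ Λs, L ((T:ℝ)⁻¹ • ∑ t, z t) w ≤ (1/T:ℝ) * ∑ t, L (z t) w := by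
    intro w hw
    have := (hLconv w hw).map_sum_le hw0 hw1 (fun t _ => hz t)
    calc L ((T:ℝ)⁻¹ • ∑ t, z t) w ≤ ∑ t, (T:ℝ)⁻¹ * L (z t) w := by
            rw [Finset.smul_sum]; exact this
      _ = (1/T:ℝ) * ∑ t, L (z t) w := by
            rw [Finset.mul_sum]; simp [one_div]
  have key2 : ∀ v ∈ Zs, (1/T:ℝ) * ∑ t, L v (lam t) ≤ L v ((T:ℝ)⁻¹ • ∑ t, lam t) := by
    intro v hv
    have := (hLconc v hv).le_map_sum hw0 hw1 (fun t _ => hlam t)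
    calc (1/T:ℝ) * ∑ t, L v (lam t) = ∑ t, (T:ℝ)⁻¹ * L v (lam t) := by
            rw [Finset.mul_sum]; simp [one_div]
      _ ≤ L v ((T:ℝ)⁻¹ • ∑ t, lam t) := by rw [Finset.smul_sum]; exact this
  constructor
  · intro z' hz'
    have h1 := key1 _ hlbar
    have h2 := hRlam _ hlbar
    have h3 := hRz z' hz'
    have h4 := key2 z' hz'
    linarith
  · intro l' hl'
    have h1 := key1 l' hl'
    have h2 := hRlam l' hl'
    have h3 := hRz _ hzbar
    have h4 := key2 _ hzbar
    linarith
end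

section
/- Let x̄ be a fractional flow and x• the integral flow produced by independently rounding each player to a random path via path-stripping (so that E[x•_{i,e}] = x̄_{i,e} for each player and edge). If with probability at least 1-β the rounded congestion exceeds the fractional congestion by at most W = √(2n ln(m/β)) on every edge, then the costs satisfy φ(x•) ≤ φ(x̄) + mW(γ+1), assuming each ℓ_e is γ-Lipschitz and ℓ_e(n) ≤ n. -/
/-!
Let `s` and `t` be the rounded and fractional congestion of an edge. Monotonicity and the
congestion bound `s ≤ t + W` give `ℓ(s) ≤ ℓ(t + W)`, and the Lipschitz bound gives
`ℓ(t + W) ≤ ℓ(t) + γW`. Hence `s·ℓ(s) ≤ s·ℓ(t) + s·γW`, where the first term is at most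
`(t + W)·ℓ(t) ≤ t·ℓ(t) + W·n` because `ℓ(t) ≤ n`, and the second is at most `nγW` because
`s ≤ n`. Summing `nW(γ + 1)` over the `m` edges and dividing by `n` gives the bound.
-/

/-- Average latency `φ(x) = (1/n) Σ_e (Σ_i x_{i,e})·ℓ_e(Σ_i x_{i,e})`. -/
noncomputable def phiCost {n m : ℕ} (ℓ : Fin m → ℝ → ℝ)
    (x : Fin n → Fin m → ℝ) : ℝ :=
  (1 / n : ℝ) * ∑ e, (∑ i, x i e) * ℓ e (∑ i, x i e)

lemma apply_le_apply_add_mul_of_le_add {f : ℝ → ℝ} {γ w s t : ℝ} (hf : Monotone f)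
    (hlip : ∀ a b, |f a - f b| ≤ γ * |a - b|) (hw : 0 ≤ w) (hst : s ≤ t + w) :
    f s ≤ f t + γ * w := by
  have hshift : f (t + w) - f t ≤ γ * w := by
    simpa [abs_of_nonneg hw] using (le_abs_self _).trans (hlip (t + w) t)
  linarith [hf hst]

lemma mul_apply_le_mul_apply_add {f : ℝ → ℝ} {γ w N s t : ℝ} (hf : Monotone f)
    (hlip : ∀ a b, |f a - f b| ≤ γ * |a - b|) (hγ : 0 ≤ γ) (hw : 0 ≤ w)
    (hs0 : 0 ≤ s) (hsN : s ≤ N) (hft0 : 0 ≤ f t) (hftN : f t ≤ N) (hst : s ≤ t + w) :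
    s * f s ≤ t * f t + N * w * (γ + 1) :=
  calc s * f s ≤ s * f t + s * (γ * w) := by
        rw [← mul_add]
        exact mul_le_mul_of_nonneg_left (apply_le_apply_add_mul_of_le_add hf hlip hw hst) hs0
    _ ≤ (t + w) * f t + N * (γ * w) := by gcongr
    _ ≤ t * f t + w * N + N * (γ * w) := by nlinarith
    _ = t * f t + N * w * (γ + 1) := by ring

lemma sum_mem_Icc_of_forall_mem_Icc {n : ℕ} {x : Fin n → ℝ} (hx : ∀ i, x i ∈ Set.Icc 0 1) :
    ∑ i, x i ∈ Set.Icc (0 : ℝ) n := by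
  refine ⟨Finset.sum_nonneg fun i _ => (hx i).1, ?_⟩
  simpa using Finset.sum_le_card_nsmul Finset.univ x 1 fun i _ => (hx i).2

lemma phiCost_le_add_of_forall_le {n m : ℕ} {ℓ : Fin m → ℝ → ℝ} {x y : Fin n → Fin m → ℝ}
    {c : ℝ} (hc : 0 ≤ c)
    (hedge : ∀ e, (∑ i, x i e) * ℓ e (∑ i, x i e) ≤ (∑ i, y i e) * ℓ e (∑ i, y i e) + n * c) :
    phiCost ℓ x ≤ phiCost ℓ y + m * c := by
  have hsum := Finset.sum_le_sum fun e (_ : e ∈ Finset.univ) => hedge e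
  rw [Finset.sum_add_distrib, Finset.sum_const, Finset.card_univ, Fintype.card_fin,
    nsmul_eq_mul] at hsum
  have hdiv : (1 / n : ℝ) * n ≤ 1 := by
    rcases n.eq_zero_or_pos with rfl | hn
    · simp
    · rw [one_div_mul_cancel (by positivity)]
  unfold phiCost
  calc (1 / n : ℝ) * ∑ e, (∑ i, x i e) * ℓ e (∑ i, x i e)
      ≤ (1 / n : ℝ) * (∑ e, (∑ i, y i e) * ℓ e (∑ i, y i e) + m * (n * c)) := by gcongr
    _ = (1 / n : ℝ) * ∑ e, (∑ i, y i e) * ℓ e (∑ i, y i e) + (1 / n * n) * (m * c) := by ring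
    _ ≤ (1 / n : ℝ) * ∑ e, (∑ i, y i e) * ℓ e (∑ i, y i e) + m * c := by
        grw [mul_le_of_le_one_left (by positivity) hdiv]

theorem rounding_cost_bound_general {n m : ℕ}
    (ℓ : Fin m → ℝ → ℝ) (γ W β : ℝ) (hγ : 0 ≤ γ)
    (hW : W = Real.sqrt (2 * n * Real.log (m / β)))
    (hlip : ∀ (e : Fin m) (a b : ℝ), |ℓ e a - ℓ e b| ≤ γ * |a - b|)
    (hmono : ∀ e, Monotone (ℓ e))
    (hnonneg : ∀ e y, 0 ≤ ℓ e y)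
    (hbound : ∀ e y, y ∈ Set.Icc (0 : ℝ) (n : ℝ) → ℓ e y ≤ n)
    (xbar xdot : Fin n → Fin m → ℝ)
    (hxbar : ∀ i e, 0 ≤ xbar i e ∧ xbar i e ≤ 1)
    (hxdot : ∀ i e, xdot i e = 0 ∨ xdot i e = 1)
    (hcong : ∀ e, (∑ i, xdot i e) ≤ (∑ i, xbar i e) + W) :
    phiCost ℓ xdot ≤ phiCost ℓ xbar + m * W * (γ + 1) := by
  have hW0 : 0 ≤ W := hW ▸ Real.sqrt_nonneg _
  have hxdot_mem : ∀ i e, xdot i e ∈ Set.Icc (0 : ℝ) 1 := fun i e => by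
    rcases hxdot i e with h | h <;> simp [h]
  rw [mul_assoc]
  refine phiCost_le_add_of_forall_le (by positivity) fun e => ?_
  obtain ⟨hdot0, hdotn⟩ := sum_mem_Icc_of_forall_mem_Icc fun i => hxdot_mem i e
  simpa only [mul_assoc] using mul_apply_le_mul_apply_add (hmono e) (hlip e) hγ hW0 hdot0 hdotn
    (hnonneg e _) (hbound e _ (sum_mem_Icc_of_forall_mem_Icc fun i => hxbar i e)) (hcong e)

/-- Rounding quality: if the integral flow `x•` produced by path-stripping randomized
rounding exceeds the fractional congestion of `x̄` by at most `W = √(2n ln(m/β))` on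
every edge, then `φ(x•) ≤ φ(x̄) + mW(γ+1)`, for `γ`-Lipschitz nondecreasing latencies
with `ℓ_e(y) ≤ n` on `[0,n]`. -/
theorem rounding_cost_bound {n m : ℕ} (hn : 0 < n) (hm : 0 < m)
    (ℓ : Fin m → ℝ → ℝ) (γ W β : ℝ) (hγ : 0 ≤ γ) (hβ : 0 < β)
    (hW : W = Real.sqrt (2 * n * Real.log (m / β)))
    (hlip : ∀ (e : Fin m) (a b : ℝ), |ℓ e a - ℓ e b| ≤ γ * |a - b|)
    (hmono : ∀ e, Monotone (ℓ e))
    (hnonneg : ∀ e y, 0 ≤ ℓ e y)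
    (hbound : ∀ e y, y ∈ Set.Icc (0 : ℝ) (n : ℝ) → ℓ e y ≤ n)
    (xbar xdot : Fin n → Fin m → ℝ)
    (hxbar : ∀ i e, 0 ≤ xbar i e ∧ xbar i e ≤ 1)
    (hxdot : ∀ i e, xdot i e = 0 ∨ xdot i e = 1)
    (hcong : ∀ e, (∑ i, xdot i e) ≤ (∑ i, xbar i e) + W) :
    phiCost ℓ xdot ≤ phiCost ℓ xbar + m * W * (γ + 1) :=
  rounding_cost_bound_general ℓ γ W β hγ hW hlip hmono hnonneg hbound xbar xdot hxbar hxdot hcong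
end

section
/- Laplace mechanism privacy: for a query f : S^n → ℝ^k with L1-sensitivity Δf = max over neighboring databases of ‖f(s) - f(s')‖₁, the mechanism M(s) = f(s) + (Z₁,…,Z_k) with Z_i i.i.d. Laplace with scale Δf/ε is ε-differentially private. -/
/-
Translating a measure with density `g` against a translation-invariant reference measure by `a`
gives the density `g (-a + ·)`, so the outputs of the mechanism on `s` and `s'` have densities
`p (x - f s)` and `p (x - f s')`, where `p` is the product Laplace density. Coordinatewise, the
triangle inequality gives `exp (-|y|/b) ≤ exp (|y - z|/b) · exp (-|z|/b)`, so the ratio of these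
densities is at most `exp (‖f s - f s'‖₁ / b) ≤ exp ε`, and integrating over `B` bounds the ratio of
probabilities by the same factor.
-/

open MeasureTheory

/-- The law of a vector of `k` i.i.d. Laplace random variables with scale `b`,
given by the density `∏ i (1/2b)·exp(-|z_i|/b)` with respect to Lebesgue measure. -/
noncomputable def lapNoise (k : ℕ) (b : ℝ) : Measure (Fin k → ℝ) :=
  volume.withDensity (fun z => ENNReal.ofReal (∏ i, (1 / (2 * b)) * Real.exp (-|z i| / b)))

/-- The Laplace mechanism: output `f(s) + Z` with `Z` i.i.d. Laplace noise of scale `b`. -/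
noncomputable def lapMech {S : Type*} {n k : ℕ}
    (f : (Fin n → S) → Fin k → ℝ) (b : ℝ) (s : Fin n → S) : Measure (Fin k → ℝ) :=
  Measure.map (fun z => f s + z) (lapNoise k b)

open scoped ENNReal

section Translation

variable {G : Type*} [MeasurableSpace G] [AddGroup G] [MeasurableAdd G]
  (ν : Measure G) [ν.IsAddLeftInvariant]

theorem map_add_left_withDensity (g : G → ℝ≥0∞) (a : G) :
    (ν.withDensity g).map (a + ·) = ν.withDensity (fun x => g (-a + x)) := by
  ext B hB
  have hadd : Measurable (a + · : G → G) := measurable_const_add a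
  rw [Measure.map_apply hadd hB, withDensity_apply _ (hadd hB), withDensity_apply _ hB,
    ← (measurePreserving_add_left ν a).setLIntegral_comp_preimage_emb
      (MeasurableEquiv.addLeft a).measurableEmbedding (fun x => g (-a + x))]
  simp only [neg_add_cancel_left]

theorem map_add_left_withDensity_le_smul {g : G → ℝ≥0∞} {a a' : G} {C : ℝ≥0∞} (hC : C ≠ ∞)
    (hg : ∀ x, g (-a + x) ≤ C * g (-a' + x)) :
    (ν.withDensity g).map (a + ·) ≤ C • (ν.withDensity g).map (a' + ·) := by
  rw [map_add_left_withDensity, map_add_left_withDensity, ← withDensity_smul' _ _ hC]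
  exact withDensity_mono (Filter.Eventually.of_forall hg)

end Translation

section LaplaceDensity

variable {ι : Type*} [Fintype ι] {b : ℝ}

noncomputable def lapDensity (b : ℝ) (z : ι → ℝ) : ℝ :=
  ∏ i, (1 / (2 * b)) * Real.exp (-|z i| / b)

theorem lapNoise_eq_withDensity (k : ℕ) (b : ℝ) :
    lapNoise k b = volume.withDensity (fun z => ENNReal.ofReal (lapDensity b z)) :=
  rfl

theorem exp_neg_abs_div_le (hb : 0 ≤ b) (y z : ℝ) :
    Real.exp (-|y| / b) ≤ Real.exp (|y - z| / b) * Real.exp (-|z| / b) := by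
  rw [← Real.exp_add, Real.exp_le_exp, ← add_div]
  gcongr
  linarith [abs_sub_abs_le_abs_sub z y, abs_sub_comm y z]

theorem lapDensity_le (hb : 0 ≤ b) (y z : ι → ℝ) :
    lapDensity b y ≤ Real.exp ((∑ i, |y i - z i|) / b) * lapDensity b z := by
  rw [lapDensity, lapDensity, Finset.sum_div, Real.exp_sum, ← Finset.prod_mul_distrib]
  refine Finset.prod_le_prod (fun i _ => by positivity) fun i _ => ?_
  rw [mul_left_comm]
  exact mul_le_mul_of_nonneg_left (exp_neg_abs_div_le hb (y i) (z i)) (by positivity)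

end LaplaceDensity

theorem lapMech_le_smul {S : Type*} {n k : ℕ} (f : (Fin n → S) → Fin k → ℝ) {b : ℝ} (hb : 0 ≤ b)
    (s s' : Fin n → S) :
    lapMech f b s ≤
      ENNReal.ofReal (Real.exp ((∑ j, |f s j - f s' j|) / b)) • lapMech f b s' := by
  rw [lapMech, lapMech, lapNoise_eq_withDensity]
  refine map_add_left_withDensity_le_smul volume ENNReal.ofReal_ne_top fun x => ?_
  rw [← ENNReal.ofReal_mul (Real.exp_nonneg _)]
  refine ENNReal.ofReal_le_ofReal ((lapDensity_le hb (-f s + x) (-f s' + x)).trans_eq ?_)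
  have hdiff : ∀ j, |(-f s + x) j - (-f s' + x) j| = |f s j - f s' j| := fun j => by
    rw [abs_sub_comm]
    simp only [Pi.add_apply, Pi.neg_apply]
    ring_nf
  simp only [hdiff]

/-- Laplace mechanism privacy: if `f` has L1-sensitivity at most `Δf`, the Laplace
mechanism with scale `Δf/ε` is `ε`-differentially private. -/
theorem laplace_mechanism_private {S : Type*} {n k : ℕ}
    (f : (Fin n → S) → Fin k → ℝ) (Δf ε : ℝ) (hΔ : 0 < Δf) (hε : 0 < ε)
    (hsens : ∀ (s : Fin n → S) (i : Fin n) (si' : S),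
      (∑ j, |f s j - f (Function.update s i si') j|) ≤ Δf) :
    ∀ (s : Fin n → S) (i : Fin n) (si' : S) (B : Set (Fin k → ℝ)), MeasurableSet B →
      lapMech f (Δf / ε) s B ≤
        ENNReal.ofReal (Real.exp ε) * lapMech f (Δf / ε) (Function.update s i si') B := by
  intro s i si' B _
  have hb : 0 < Δf / ε := div_pos hΔ hε
  have hratio : (∑ j, |f s j - f (Function.update s i si') j|) / (Δf / ε) ≤ ε := by
    rw [div_le_iff₀ hb, mul_div_cancel₀ _ hε.ne']
    exact hsens s i si'
  calc lapMech f (Δf / ε) s B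
      ≤ ENNReal.ofReal (Real.exp ((∑ j, |f s j - f (Function.update s i si') j|) / (Δf / ε))) *
          lapMech f (Δf / ε) (Function.update s i si') B :=
        lapMech_le_smul f hb.le s _ B
    _ ≤ ENNReal.ofReal (Real.exp ε) * lapMech f (Δf / ε) (Function.update s i si') B := by
        gcongr
end

section
/- Mediator incentive theorem: Suppose M : (⊥ ∪ S)^n → F^n × [0,U]^m is (ε, δ)-jointly differentially private, and for every input demand profile s, with probability 1-β the suggested flow is an η_eq-approximate Nash flow of the tolled routing game with per-player costs bounded by m(U+n). Then truthful reporting plus faithfully following the suggestion (the 'good behavior' strategy profile) is an η-approximate ex-post Nash equilibrium of the mediated game, where η = η_eq + m(U+n)(2ε + β + δ). -/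
/-!
On the event (probability `≥ 1 - β`) that the suggested flow is an `η_eq`-Nash flow, player
`i`'s truthful cost is at most `η_eq` plus her best-response cost against the other players'
routes and the tolls; off it, her cost is at most `m(U+n)`. Capped at `m(U+n)`, that
best-response cost is a bounded function of the others' routes and the tolls alone, so joint
differential privacy moves its expectation to the world where `i` deviates, at a price of
`(e^ε - 1 + δ) m(U+n) ≤ (2ε + δ) m(U+n)`. There it bounds from below whatever route `i` ends up
taking.
-/

/-- Player `i`'s cost under realized routes `g` (0/1 edge vectors) and tolls `τ`:
`Σ_e g_{i,e}·(ℓ_e(Σ_j g_{j,e}) + τ_e)`. -/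
noncomputable def pcost {n m : ℕ} (ℓ : Fin m → ℝ → ℝ)
    (g : Fin n → Fin m → ℝ) (τ : Fin m → ℝ) (i : Fin n) : ℝ :=
  ∑ e, g i e * (ℓ e (∑ j, g j e) + τ e)

/-- Player `i`'s expected cost in the mediated game when the mediator's output is drawn
from `μ` and each player `j` post-processes her suggested route with `f j`. -/
noncomputable def expCost {n m : ℕ} (ℓ : Fin m → ℝ → ℝ)
    (μ : PMF ((Fin n → Fin m → ℝ) × (Fin m → ℝ)))
    (f : Fin n → (Fin m → ℝ) → (Fin m → ℝ)) (i : Fin n) : ℝ :=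
  ∑' ω : (Fin n → Fin m → ℝ) × (Fin m → ℝ),
    (μ ω).toReal * pcost ℓ (fun j => f j (ω.1 j)) ω.2 i

open ENNReal

namespace PMF

variable {α β : Type*}

theorem toOuterMeasure_add_compl (p : PMF α) (s : Set α) :
    p.toOuterMeasure s + p.toOuterMeasure sᶜ = 1 := by
  rw [toOuterMeasure_apply, toOuterMeasure_apply, ← ENNReal.tsum_add, ← tsum_coe p]
  exact tsum_congr fun a => congrFun (Set.indicator_self_add_compl s p) a

theorem toOuterMeasure_compl_le_ofReal {p : PMF α} {s : Set α} {β : ℝ}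
    (h : ENNReal.ofReal (1 - β) ≤ p.toOuterMeasure s) :
    p.toOuterMeasure sᶜ ≤ ENNReal.ofReal β := by
  refine (ENNReal.add_le_add_iff_left (a := ENNReal.ofReal (1 - β)) ofReal_ne_top).1 ?_
  calc ENNReal.ofReal (1 - β) + p.toOuterMeasure sᶜ
      ≤ p.toOuterMeasure s + p.toOuterMeasure sᶜ := by gcongr
    _ = ENNReal.ofReal (1 - β + β) := by rw [toOuterMeasure_add_compl]; simp
    _ ≤ ENNReal.ofReal (1 - β) + ENNReal.ofReal β := ofReal_add_le

theorem tsum_toReal_mul_eq {p : PMF α} {h : α → ℝ} (hh : ∀ a ∈ p.support, 0 ≤ h a) :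
    ∑' a, (p a).toReal * h a = (∑' a, p a * ENNReal.ofReal (h a)).toReal := by
  rw [ENNReal.tsum_toReal_eq fun a => mul_ne_top (p.apply_ne_top a) ofReal_ne_top]
  refine tsum_congr fun a => ?_
  by_cases ha : a ∈ p.support
  · rw [toReal_mul, toReal_ofReal (hh a ha)]
  · simp [(p.apply_eq_zero_iff a).2 ha]

theorem tsum_mul_le_of_le {p : PMF α} {φ : α → ℝ≥0∞} {B : ℝ≥0∞}
    (h : ∀ a ∈ p.support, φ a ≤ B) : ∑' a, p a * φ a ≤ B := by
  calc ∑' a, p a * φ a ≤ ∑' a, p a * B := ENNReal.tsum_le_tsum fun a => by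
        by_cases ha : a ∈ p.support
        · gcongr; exact h a ha
        · simp [(p.apply_eq_zero_iff a).2 ha]
    _ = B := by rw [ENNReal.tsum_mul_right, tsum_coe, one_mul]

theorem tsum_map_mul_s17 (p : PMF α) (f : α → β) (φ : β → ℝ≥0∞) :
    ∑' b, p.map f b * φ b = ∑' a, p a * φ (f a) := by
  simp only [map_apply, ← ENNReal.tsum_mul_right]
  rw [ENNReal.tsum_comm]
  refine tsum_congr fun a => ?_
  simp [ite_mul]

theorem tsum_mul_le_of_le_add_on_of_compl_le {p : PMF α} {f g : α → ℝ≥0∞} {G : Set α}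
    {η B β : ℝ≥0∞} (hG : ∀ a ∈ p.support, a ∈ G → f a ≤ g a + η)
    (hB : ∀ a ∈ p.support, f a ≤ B) (hGc : p.toOuterMeasure Gᶜ ≤ β) :
    ∑' a, p a * f a ≤ ∑' a, p a * g a + η + B * β := by
  have hpt : ∀ a, p a * f a ≤ p a * g a + p a * η + Gᶜ.indicator p a * B := by
    intro a
    by_cases ha : a ∈ p.support
    · by_cases haG : a ∈ G
      · calc p a * f a ≤ p a * (g a + η) := by gcongr; exact hG a ha haG
          _ ≤ _ := by rw [mul_add]; exact le_self_add
      · calc p a * f a ≤ Gᶜ.indicator p a * B := by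
              rw [Set.indicator_of_mem (Set.mem_compl haG)]; gcongr; exact hB a ha
          _ ≤ _ := le_add_self
    · simp [(p.apply_eq_zero_iff a).2 ha]
  calc ∑' a, p a * f a ≤ ∑' a, (p a * g a + p a * η + Gᶜ.indicator p a * B) :=
        ENNReal.tsum_le_tsum hpt
    _ = ∑' a, p a * g a + η + p.toOuterMeasure Gᶜ * B := by
        rw [ENNReal.tsum_add, ENNReal.tsum_add, ENNReal.tsum_mul_right, ENNReal.tsum_mul_right,
          tsum_coe, one_mul, toOuterMeasure_apply]
    _ ≤ ∑' a, p a * g a + η + B * β := by rw [mul_comm]; gcongr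

theorem tsum_mul_le_of_toOuterMeasure_le_s17 {p q : PMF α} {c δ B : ℝ≥0∞} (hc : c ≠ ∞)
    (h : ∀ s, p.toOuterMeasure s ≤ c * q.toOuterMeasure s + δ) {φ : α → ℝ≥0∞}
    (hφ : ∀ a, φ a ≤ B) : ∑' a, p a * φ a ≤ c * ∑' a, q a * φ a + δ * B := by
  -- `p ≤ c • q + (p - c • q)`, and the excess `p - c • q` lives on `s`, where `h` bounds its mass.
  set s := {a | c * q a < p a}
  have hexcess : ∑' a, (p a - c * q a) ≤ δ := by
    have hsplit : ∀ a, p a - c * q a + s.indicator (fun a => c * q a) a = s.indicator p a := by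
      intro a
      by_cases ha : a ∈ s
      · simp only [Set.indicator_of_mem ha]; exact tsub_add_cancel_of_le (le_of_lt ha)
      · have hle : p a ≤ c * q a := not_lt.1 ha
        simp [Set.indicator_of_notMem ha, tsub_eq_zero_of_le hle]
    have hcq : ∑' a, s.indicator (fun a => c * q a) a = c * q.toOuterMeasure s := by
      simp only [Set.indicator_mul_right, ENNReal.tsum_mul_left, toOuterMeasure_apply]
    have hfin : c * q.toOuterMeasure s ≠ ∞ :=
      mul_ne_top hc (by rw [toOuterMeasure_apply]; exact q.tsum_coe_indicator_ne_top s)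
    refine ENNReal.le_of_add_le_add_right hfin ?_
    calc ∑' a, (p a - c * q a) + c * q.toOuterMeasure s = p.toOuterMeasure s := by
          rw [← hcq, ← ENNReal.tsum_add, toOuterMeasure_apply]; exact tsum_congr hsplit
      _ ≤ δ + c * q.toOuterMeasure s := by rw [add_comm]; exact h s
  calc ∑' a, p a * φ a ≤ ∑' a, (c * (q a * φ a) + (p a - c * q a) * B) := by
        refine ENNReal.tsum_le_tsum fun a => ?_
        calc p a * φ a ≤ (c * q a + (p a - c * q a)) * φ a := by gcongr; exact le_add_tsub
          _ ≤ c * (q a * φ a) + (p a - c * q a) * B := by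
              rw [add_mul, mul_assoc]; gcongr; exact hφ a
    _ ≤ c * ∑' a, q a * φ a + δ * B := by
        rw [ENNReal.tsum_add, ENNReal.tsum_mul_left, ENNReal.tsum_mul_right]; gcongr

theorem tsum_mul_comp_le_of_dp {p q : PMF α} (f : α → β) {ε δ B : ℝ} (hε0 : 0 ≤ ε)
    (hε1 : ε ≤ 1) (hδ : 0 ≤ δ)
    (h : ∀ s : Set β, p.toOuterMeasure (f ⁻¹' s) ≤
      ENNReal.ofReal (Real.exp ε) * q.toOuterMeasure (f ⁻¹' s) + ENNReal.ofReal δ)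
    {φ : β → ℝ≥0∞} (hφ : ∀ b, φ b ≤ ENNReal.ofReal B) :
    ∑' a, p a * φ (f a) ≤ ∑' a, q a * φ (f a) + ENNReal.ofReal ((2 * ε + δ) * B) := by
  have hdp := tsum_mul_le_of_toOuterMeasure_le_s17 (p := p.map f) (q := q.map f) ofReal_ne_top
    (by simpa only [toOuterMeasure_map_apply] using h) hφ
  rw [tsum_map_mul_s17, tsum_map_mul_s17] at hdp
  set E := ∑' a, q a * φ (f a)
  have hexp : ENNReal.ofReal (Real.exp ε) ≤ 1 + ENNReal.ofReal (2 * ε) := by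
    rw [← ofReal_one, ← ofReal_add zero_le_one (by positivity)]
    refine ofReal_le_ofReal ?_
    have := Real.abs_exp_sub_one_le (x := ε) (by rwa [abs_of_nonneg hε0])
    rw [abs_of_nonneg hε0] at this
    linarith [le_abs_self (Real.exp ε - 1)]
  have hE : E ≤ ENNReal.ofReal B := tsum_mul_le_of_le fun a _ => hφ (f a)
  calc _ ≤ ENNReal.ofReal (Real.exp ε) * E + ENNReal.ofReal δ * ENNReal.ofReal B := hdp
    _ ≤ (1 + ENNReal.ofReal (2 * ε)) * E + ENNReal.ofReal δ * ENNReal.ofReal B := by gcongr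
    _ ≤ E + ENNReal.ofReal (2 * ε) * ENNReal.ofReal B + ENNReal.ofReal δ * ENNReal.ofReal B := by
        rw [add_mul, one_mul]; gcongr
    _ = E + ENNReal.ofReal ((2 * ε + δ) * B) := by
        rw [ofReal_mul (by positivity : 0 ≤ 2 * ε + δ), ofReal_add (by positivity) hδ, add_mul,
          add_assoc]

end PMF

theorem Function.update_id_apply_eq_update {ι β : Type*} [DecidableEq ι] (g : ι → β) (i : ι)
    (h : β → β) : (fun j => Function.update (fun _ => id) i h j (g j)) =
      Function.update g i (h (g i)) := by
  funext j
  rcases eq_or_ne j i with rfl | hj <;> simp [*]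

theorem Equiv.funSplitAt_symm_mk_eq_update {ι β : Type*} [DecidableEq ι] (g : ι → β) (i : ι)
    (q : β) : (Equiv.funSplitAt i β).symm (q, fun j => g j) = Function.update g i q := by
  funext j
  rcases eq_or_ne j i with rfl | hj <;> simp [Equiv.funSplitAt_symm_apply, *]

section Routing

variable {n m : ℕ}

def othersView (i : Fin n) (ω : (Fin n → Fin m → ℝ) × (Fin m → ℝ)) :
    ({j : Fin n // j ≠ i} → Fin m → ℝ) × (Fin m → ℝ) :=
  (fun j => ω.1 j, ω.2)

noncomputable def cappedBestResponseCost (ℓ : Fin m → ℝ → ℝ) (i : Fin n)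
    (R : Set (Fin m → ℝ)) (B : ℝ) (z : ({j : Fin n // j ≠ i} → Fin m → ℝ) × (Fin m → ℝ)) :
    ℝ≥0∞ :=
  min (⨅ q ∈ R, ENNReal.ofReal (pcost ℓ ((Equiv.funSplitAt i _).symm (q, z.1)) z.2 i))
    (ENNReal.ofReal B)

variable {ℓ : Fin m → ℝ → ℝ} {i : Fin n} {R : Set (Fin m → ℝ)} {B : ℝ}

theorem cappedBestResponseCost_le (z : ({j : Fin n // j ≠ i} → Fin m → ℝ) × (Fin m → ℝ)) :
    cappedBestResponseCost ℓ i R B z ≤ ENNReal.ofReal B :=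
  min_le_right _ _

theorem cappedBestResponseCost_othersView (ω : (Fin n → Fin m → ℝ) × (Fin m → ℝ)) :
    cappedBestResponseCost ℓ i R B (othersView i ω) =
      min (⨅ q ∈ R, ENNReal.ofReal (pcost ℓ (Function.update ω.1 i q) ω.2 i))
        (ENNReal.ofReal B) := by
  simp only [cappedBestResponseCost, othersView, Equiv.funSplitAt_symm_mk_eq_update]

theorem cappedBestResponseCost_othersView_le {ω : (Fin n → Fin m → ℝ) × (Fin m → ℝ)}
    {q : Fin m → ℝ} (hq : q ∈ R) :
    cappedBestResponseCost ℓ i R B (othersView i ω) ≤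
      ENNReal.ofReal (pcost ℓ (Function.update ω.1 i q) ω.2 i) := by
  rw [cappedBestResponseCost_othersView]
  exact (min_le_left _ _).trans (iInf₂_le q hq)

theorem ofReal_pcost_le_cappedBestResponseCost_add {ω : (Fin n → Fin m → ℝ) × (Fin m → ℝ)}
    {η : ℝ} (hNash : ∀ q ∈ R, pcost ℓ ω.1 ω.2 i ≤ pcost ℓ (Function.update ω.1 i q) ω.2 i + η)
    (hB : pcost ℓ ω.1 ω.2 i ≤ B) :
    ENNReal.ofReal (pcost ℓ ω.1 ω.2 i) ≤
      cappedBestResponseCost ℓ i R B (othersView i ω) + ENNReal.ofReal η := by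
  rw [cappedBestResponseCost_othersView, ← min_add_add_right]
  refine le_min ?_ ((ofReal_le_ofReal hB).trans le_self_add)
  simp only [ENNReal.iInf_add]
  exact le_iInf₂ fun q hq => (ofReal_le_ofReal (hNash q hq)).trans ofReal_add_le

end Routing

theorem tsum_pcost_le_tsum_pcost_deviation_add {n m : ℕ} {ℓ : Fin m → ℝ → ℝ} {i : Fin n}
    {R : Set (Fin m → ℝ)} {f' : (Fin m → ℝ) → Fin m → ℝ} (hf' : ∀ p, f' p ∈ R)
    {P Q : PMF ((Fin n → Fin m → ℝ) × (Fin m → ℝ))} {G : Set ((Fin n → Fin m → ℝ) × (Fin m → ℝ))}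
    {B ε δ β η : ℝ} (hB : 0 ≤ B) (hε0 : 0 ≤ ε) (hε1 : ε ≤ 1) (hδ : 0 ≤ δ) (hβ : 0 ≤ β)
    (hη : 0 ≤ η)
    (hJDP : ∀ s, P.toOuterMeasure (othersView i ⁻¹' s) ≤
      ENNReal.ofReal (Real.exp ε) * Q.toOuterMeasure (othersView i ⁻¹' s) + ENNReal.ofReal δ)
    (hNash : ∀ ω ∈ G, ∀ q ∈ R,
      pcost ℓ ω.1 ω.2 i ≤ pcost ℓ (Function.update ω.1 i q) ω.2 i + η)
    (hG : ENNReal.ofReal (1 - β) ≤ P.toOuterMeasure G)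
    (hPB : ∀ ω ∈ P.support, pcost ℓ ω.1 ω.2 i ≤ B) :
    ∑' ω, P ω * ENNReal.ofReal (pcost ℓ ω.1 ω.2 i) ≤
      ∑' ω, Q ω * ENNReal.ofReal (pcost ℓ (Function.update ω.1 i (f' (ω.1 i))) ω.2 i) +
        ENNReal.ofReal (η + B * (2 * ε + β + δ)) := by
  set Ψ := fun ω => cappedBestResponseCost ℓ i R B (othersView i ω)
  have hNashStep := PMF.tsum_mul_le_of_le_add_on_of_compl_le (g := Ψ)
    (fun ω hω hωG => ofReal_pcost_le_cappedBestResponseCost_add (hNash ω hωG) (hPB ω hω))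
    (fun ω hω => ofReal_le_ofReal (hPB ω hω)) (PMF.toOuterMeasure_compl_le_ofReal hG)
  have hDPStep : ∑' ω, P ω * Ψ ω ≤ ∑' ω, Q ω * Ψ ω + ENNReal.ofReal ((2 * ε + δ) * B) :=
    PMF.tsum_mul_comp_le_of_dp (othersView i) hε0 hε1 hδ hJDP cappedBestResponseCost_le
  have hDevStep : ∑' ω, Q ω * Ψ ω ≤
      ∑' ω, Q ω * ENNReal.ofReal (pcost ℓ (Function.update ω.1 i (f' (ω.1 i))) ω.2 i) :=
    ENNReal.tsum_le_tsum fun ω => by gcongr; exact cappedBestResponseCost_othersView_le (hf' _)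
  calc _ ≤ ∑' ω, P ω * Ψ ω + ENNReal.ofReal η + ENNReal.ofReal B * ENNReal.ofReal β :=
        hNashStep
    _ ≤ ∑' ω, Q ω * ENNReal.ofReal (pcost ℓ (Function.update ω.1 i (f' (ω.1 i))) ω.2 i) +
          ENNReal.ofReal ((2 * ε + δ) * B) + ENNReal.ofReal η +
            ENNReal.ofReal B * ENNReal.ofReal β := by
        gcongr; exact hDPStep.trans (by gcongr)
    _ = _ := by
        rw [← ofReal_mul hB, add_assoc, add_assoc, ← ofReal_add hη (by positivity),
          ← ofReal_add (by positivity) (by positivity)]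
        congr 2; ring

/-- Mediator incentive theorem: if the mediator `M` is `(ε,δ)`-jointly differentially
private and, with probability `1-β`, its suggested flow is an `η_eq`-approximate Nash flow
of the tolled game (with per-player costs bounded by `m(U+n)`), then good behavior
(truthful reporting plus following the suggestion) is an `η`-approximate ex-post Nash
equilibrium of the mediated game, for `η = η_eq + m(U+n)(2ε + β + δ)`. -/
theorem mediator_incentive {S : Type*} {n m : ℕ}
    (feas : S → Set (Fin m → ℝ)) (ℓ : Fin m → ℝ → ℝ)
    (U ε δ β ηeq : ℝ)
    (hε0 : 0 ≤ ε) (hε1 : ε < 1) (hδ : 0 ≤ δ) (hβ : 0 ≤ β) (hηeq : 0 ≤ ηeq) (hU : 0 ≤ U)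
    (M : (Fin n → Option S) → PMF ((Fin n → Fin m → ℝ) × (Fin m → ℝ)))
    -- `M` is `(ε,δ)`-jointly differentially private: for each player `i`, the joint
    -- distribution of the routes suggested to the other players and the tolls is
    -- insensitive to `i`'s report.
    (hJDP : ∀ (i : Fin n) (r : Fin n → Option S) (r' : Option S)
        (B : Set (({j : Fin n // j ≠ i} → Fin m → ℝ) × (Fin m → ℝ))),
        (M r).toOuterMeasure
            {ω | ((fun j : {j : Fin n // j ≠ i} => ω.1 j.1), ω.2) ∈ B} ≤
          ENNReal.ofReal (Real.exp ε) *
            (M (Function.update r i r')).toOuterMeasure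
              {ω | ((fun j : {j : Fin n // j ≠ i} => ω.1 j.1), ω.2) ∈ B}
            + ENNReal.ofReal δ)
    -- Every output of `M` consists of feasible routes (matching reported demands when
    -- reported) and tolls in `[0, U]`.
    (hsupp : ∀ (r : Fin n → Option S) (ω), ω ∈ (M r).support →
        (∀ j, ∃ s0, ω.1 j ∈ feas s0) ∧ (∀ e, 0 ≤ ω.2 e ∧ ω.2 e ≤ U) ∧
        (∀ j s0, r j = some s0 → ω.1 j ∈ feas s0))
    -- Per-player tolled costs are bounded by `m(U+n)` (and nonnegative) whenever routes
    -- are feasible and tolls lie in `[0, U]`.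
    (hbound : ∀ (g : Fin n → Fin m → ℝ) (τ : Fin m → ℝ),
        (∀ j, ∃ s0, g j ∈ feas s0) → (∀ e, 0 ≤ τ e ∧ τ e ≤ U) →
        ∀ i : Fin n, 0 ≤ pcost ℓ g τ i ∧ pcost ℓ g τ i ≤ m * (U + n))
    -- With probability at least `1 - β`, the suggested flow is an `η_eq`-approximate
    -- Nash flow of the routing game with the output tolls added.
    (hNash : ∀ strue : Fin n → S,
        ENNReal.ofReal (1 - β) ≤
          (M (fun j => some (strue j))).toOuterMeasure
            {ω | ∀ i : Fin n, ω.1 i ∈ feas (strue i) ∧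
              ∀ q ∈ feas (strue i),
                pcost ℓ ω.1 ω.2 i ≤ pcost ℓ (Function.update ω.1 i q) ω.2 i + ηeq}) :
    -- Good behavior is an `η`-approximate ex-post Nash equilibrium: for every
    -- realization of demands, no unilateral deviation (misreporting, opting out, or
    -- post-processing the suggestion into another feasible route) gains more than `η`.
    ∀ (strue : Fin n → S) (i : Fin n) (r' : Option S)
      (f' : (Fin m → ℝ) → Fin m → ℝ), (∀ p, f' p ∈ feas (strue i)) →
      expCost ℓ (M (fun j => some (strue j))) (fun _ => id) i ≤
        expCost ℓ (M (Function.update (fun j => some (strue j)) i r'))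
            (Function.update (fun _ : Fin n => (id : (Fin m → ℝ) → Fin m → ℝ)) i f') i
          + (ηeq + m * (U + n) * (2 * ε + β + δ)) := by
  intro strue i r' f' hf'
  set B : ℝ := m * (U + n)
  set P := M fun j => some (strue j)
  set Q := M (Function.update (fun j => some (strue j)) i r')
  have hcostP : ∀ ω ∈ P.support, 0 ≤ pcost ℓ ω.1 ω.2 i ∧ pcost ℓ ω.1 ω.2 i ≤ B :=
    fun ω hω => hbound _ _ (hsupp _ ω hω).1 (hsupp _ ω hω).2.1 i
  have hcostQ : ∀ ω ∈ Q.support, 0 ≤ pcost ℓ (Function.update ω.1 i (f' (ω.1 i))) ω.2 i ∧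
      pcost ℓ (Function.update ω.1 i (f' (ω.1 i))) ω.2 i ≤ B := by
    refine fun ω hω => hbound _ _ (fun j => ?_) (hsupp _ ω hω).2.1 i
    rcases eq_or_ne j i with rfl | hj
    · exact ⟨strue j, by simpa using hf' _⟩
    · simpa [hj] using (hsupp _ ω hω).1 j
  have hcompare := tsum_pcost_le_tsum_pcost_deviation_add hf' (by positivity) hε0 hε1.le hδ hβ
    hηeq (hJDP i _ r') (fun ω hω => (hω i).2) (hNash strue) fun ω hω => (hcostP ω hω).2
  have hEP : expCost ℓ P (fun _ => id) i =
      (∑' ω, P ω * ENNReal.ofReal (pcost ℓ ω.1 ω.2 i)).toReal :=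
    PMF.tsum_toReal_mul_eq fun ω hω => (hcostP ω hω).1
  have hEQ : expCost ℓ Q (Function.update (fun _ => id) i f') i =
      (∑' ω, Q ω * ENNReal.ofReal (pcost ℓ (Function.update ω.1 i (f' (ω.1 i))) ω.2 i)).toReal := by
    simp only [expCost, Function.update_id_apply_eq_update]
    exact PMF.tsum_toReal_mul_eq fun ω hω => (hcostQ ω hω).1
  rw [hEP, hEQ, ← toReal_ofReal (by positivity : 0 ≤ ηeq + B * (2 * ε + β + δ))]
  exact toReal_le_add hcompare (ne_top_of_le_ne_top ofReal_ne_top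
    (PMF.tsum_mul_le_of_le fun ω hω => ofReal_le_ofReal (hcostQ ω hω).2)) ofReal_ne_top
end

section
/- Exponential mechanism utility: For a finite outcome set O, database s, quality score q : S^n × O → ℝ with sensitivity Δq, the exponential mechanism that outputs o with probability proportional to exp(ε·q(s,o)/(2Δq)) satisfies: for every t > 0, with probability at least 1 - e^{-t}, q(s, M_E(s)) ≥ max_{o∈O} q(s,o) - (2Δq/ε)(log|O| + t). -/
/-!
Normalising by the weight of a maximiser `o₀` of `q` bounds the probability of each outcome `o`
by `exp (ε (q o - q o₀) / (2Δq))`. For an outcome below the threshold this is at most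
`exp (-(log |O| + t)) = e^{-t} / |O|`, and a union bound over the at most `|O|` such outcomes
leaves probability at least `1 - e^{-t}` for the rest.
-/

open Real
open scoped ENNReal

theorem PMF.one_sub_card_mul_le_toOuterMeasure {α : Type*} [Fintype α] (p : PMF α) {s : Set α}
    {δ : ℝ≥0∞} (h : ∀ a ∉ s, p a ≤ δ) : 1 - Fintype.card α * δ ≤ p.toOuterMeasure s := by
  have hcompl : ∑ a, sᶜ.indicator p a ≤ Fintype.card α * δ :=
    calc ∑ a, sᶜ.indicator p a ≤ ∑ _a : α, δ :=
          Finset.sum_le_sum fun a _ => Set.indicator_apply_le' (h a) fun _ => zero_le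
      _ = Fintype.card α * δ := by simp
  have htotal : ∑ a, s.indicator p a + ∑ a, sᶜ.indicator p a = 1 := by
    rw [← Finset.sum_add_distrib, ← p.tsum_coe, tsum_fintype]
    simp only [Set.indicator_self_add_compl_apply]
  rw [toOuterMeasure_apply_fintype, tsub_le_iff_right, ← htotal]
  gcongr

theorem Real.exp_div_sum_exp_le_exp_sub {ι : Type*} [Fintype ι] (f : ι → ℝ) (i j : ι) :
    exp (f i) / ∑ k, exp (f k) ≤ exp (f i - f j) := by
  rw [exp_sub]
  exact div_le_div_of_nonneg_left (exp_pos _).le (exp_pos _)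
    (Finset.single_le_sum (fun k _ => (exp_pos (f k)).le) (Finset.mem_univ j))

/-- Exponential mechanism utility: the mechanism that outputs `o` with probability
proportional to `exp(ε·q(o)/(2Δq))` over a finite outcome set satisfies, for every
`t > 0`, with probability at least `1 - e^{-t}`,
`q(M_E(s)) ≥ max_o q(o) - (2Δq/ε)(log|O| + t)`. -/
theorem exponential_mechanism_utility {O : Type*} [Fintype O] [Nonempty O]
    (q : O → ℝ) (Δq ε : ℝ) (hΔ : 0 < Δq) (hε : 0 < ε)
    (M : PMF O)
    (hM : ∀ o, M o = ENNReal.ofReal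
      (Real.exp (ε * q o / (2 * Δq)) / ∑ o' : O, Real.exp (ε * q o' / (2 * Δq)))) :
    ∀ t : ℝ, 0 < t →
      ENNReal.ofReal (1 - Real.exp (-t)) ≤
        M.toOuterMeasure
          {o | Finset.univ.sup' Finset.univ_nonempty q -
              (2 * Δq / ε) * (Real.log (Fintype.card O) + t) ≤ q o} := by
  intro t _
  obtain ⟨o₀, -, hOPT⟩ := Finset.exists_mem_eq_sup' Finset.univ_nonempty q
  rw [hOPT]
  have hcard : (0 : ℝ) < Fintype.card O := by exact_mod_cast Fintype.card_pos
  have hbad : ∀ o ∉ {o | q o₀ - (2 * Δq / ε) * (log (Fintype.card O) + t) ≤ q o},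
      M o ≤ ENNReal.ofReal (exp (-t) / Fintype.card O) := by
    intro o ho
    have hgap : ε * q o < ε * q o₀ - 2 * Δq * (log (Fintype.card O) + t) := by
      have := mul_lt_mul_of_pos_left (not_le.1 ho) hε
      rwa [mul_sub, ← mul_assoc, mul_div_cancel₀ _ hε.ne'] at this
    rw [hM o]
    refine ENNReal.ofReal_le_ofReal ?_
    calc _ ≤ exp (ε * q o / (2 * Δq) - ε * q o₀ / (2 * Δq)) :=
          exp_div_sum_exp_le_exp_sub (fun o ↦ ε * q o / (2 * Δq)) o o₀
      _ ≤ exp (-(log (Fintype.card O) + t)) := by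
          rw [exp_le_exp, ← sub_div, div_le_iff₀ (by positivity)]
          linarith
      _ = exp (-t) / Fintype.card O := by
          rw [neg_add, exp_add, exp_neg, exp_log hcard]
          ring
  calc ENNReal.ofReal (1 - exp (-t))
      = 1 - Fintype.card O * ENNReal.ofReal (exp (-t) / Fintype.card O) := by
        rw [ENNReal.ofReal_sub _ (exp_pos _).le, ENNReal.ofReal_one, ← ENNReal.ofReal_natCast,
          ← ENNReal.ofReal_mul hcard.le, mul_div_cancel₀ _ hcard.ne']
    _ ≤ _ := M.one_sub_card_mul_le_toOuterMeasure hbad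
end
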